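/- Fix integers v ≥ 1 and block sizes p₀, p₁, …, p_v ≥ 1 with p = p₀ + p₁ + ⋯ + p_v, partitioning the coordinates of ℝ^p into consecutive blocks of sizes p₁, …, p_v, p₀ (the last block, indexed 0, is the noise block). Fix a finite nonempty set 𝒯 of lags and real numbers λ_{τj} for τ ∈ 𝒯, j = 0, 1, …, v, with λ_{τ0} = 0 for all τ ∈ 𝒯, and let D_τ = diag(λ_{τ1}I_{p₁}, …, λ_{τv}I_{p_v}, λ_{τ0}I_{p₀}) ∈ ℝ^{p×p}. Let (Û_T)_{T∈ℕ} be random orthogonal p×p matrices whose off-diagonal blocks relative to the partition satisfy √T·Û_{ij,T} = O_p(1) for i ≠ j, and for each τ ∈ 𝒯 let (Ĥ_{τ,T})_{T∈ℕ} be random symmetric p×p matrices with √T(Ĥ_{τ,T} − D_τ) = O_p(1). Then for every τ ∈ 𝒯 and every group index i ∈ {0, 1, …, v}, the i-th diagonal block of Û_TᵀĤ_{τ,T}Û_T satisfies (Û_TᵀĤ_{τ,T}Û_T)_{ii} = λ_{τi}I_{p_i} + Û_{ii,T}ᵀ(Ĥ_{τ,ii,T} − λ_{τi}I_{p_i})Û_{ii,T}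 + O_p(1/T), where Ĥ_{τ,ii,T} is the i-th diagonal block of Ĥ_{τ,T}; in particular, diag(Û_TᵀĤ_{τ,T}Û_T) converges in probability to D_τ. -/

import Mathlib

open MeasureTheory Filter Matrix Finset
open scoped Topology ENNReal NNReal Kronecker

noncomputable section

/-- Squared Frobenius norm of a real matrix. -/
def frobSq {ι κ : Type*} [Fintype ι] [Fintype κ] (M : Matrix ι κ ℝ) : ℝ :=
  ∑ i, ∑ j, (M i j) ^ 2

/-- Frobenius norm of a real matrix. -/
def frobNorm {ι κ : Type*} [Fintype ι] [Fintype κ] (M : Matrix ι κ ℝ) : ℝ :=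
  Real.sqrt (frobSq M)

/-- Euclidean norm of a vector. -/
def euclNorm {ι : Type*} [Fintype ι] (x : ι → ℝ) : ℝ :=
  Real.sqrt (∑ i, (x i) ^ 2)

/-- `X_T = O_p(1)` (boundedness in probability), matrix version, Frobenius norm. -/
def MatIsOp {Ω ι κ : Type*} [MeasurableSpace Ω] [Fintype ι] [Fintype κ]
    (μ : Measure Ω) (X : ℕ → Ω → Matrix ι κ ℝ) : Prop :=
  ∀ ε : ℝ, 0 < ε → ∃ M : ℝ, 0 < M ∧ ∀ T, μ {ω | M < frobNorm (X T ω)} ≤ ENNReal.ofReal ε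

/-- `X_T = O_p(1)` (boundedness in probability), vector version, Euclidean norm. -/
def VecIsOp {Ω ι : Type*} [MeasurableSpace Ω] [Fintype ι]
    (μ : Measure Ω) (X : ℕ → Ω → ι → ℝ) : Prop :=
  ∀ ε : ℝ, 0 < ε → ∃ M : ℝ, 0 < M ∧ ∀ T, μ {ω | M < euclNorm (X T ω)} ≤ ENNReal.ofReal ε

/-- Convergence to zero in probability, matrix version (Frobenius norm). -/
def MatTendstoP0 {Ω ι κ : Type*} [MeasurableSpace Ω] [Fintype ι] [Fintype κ]
    (μ : Measure Ω) (X : ℕ → Ω → Matrix ι κ ℝ) : Prop :=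
  ∀ ε : ℝ, 0 < ε → Tendsto (fun T => μ {ω | ε < frobNorm (X T ω)}) atTop (𝓝 0)

/-- Convergence to zero in probability, real-valued version. -/
def RealTendstoP0 {Ω : Type*} [MeasurableSpace Ω]
    (μ : Measure Ω) (X : ℕ → Ω → ℝ) : Prop :=
  ∀ ε : ℝ, 0 < ε → Tendsto (fun T => μ {ω | ε < |X T ω|}) atTop (𝓝 0)

/-- Convergence in distribution: weak convergence of the laws to the measure `ν`. -/
def TendstoInDist {Ω E : Type*} [MeasurableSpace Ω] [MeasurableSpace E] [TopologicalSpace E]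
    (μ : Measure Ω) (X : ℕ → Ω → E) (ν : Measure E) : Prop :=
  ∀ f : BoundedContinuousFunction E ℝ,
    Tendsto (fun T => ∫ ω, f (X T ω) ∂μ) atTop (𝓝 (∫ x, f x ∂ν))

/-- The square root of a positive semidefinite matrix, as `Matrix.PosSemidef.sqrt` was defined
in the older Mathlib (removed since). -/
def psdSqrt {ι : Type*} [Fintype ι] [DecidableEq ι] {V : Matrix ι ι ℝ} (hV : V.PosSemidef) :
    Matrix ι ι ℝ :=
  hV.1.eigenvectorUnitary.1 * diagonal ((↑) ∘ (Real.sqrt ∘ hV.1.eigenvalues))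
    * (star hV.1.eigenvectorUnitary : Matrix ι ι ℝ)

open Classical in
/-- The centered (possibly degenerate) Gaussian distribution `N(0, V)` on `ι → ℝ`,
realized as the law of `V^{1/2} z` with `z` standard Gaussian. -/
def gaussianOfCov {ι : Type*} [Fintype ι] [DecidableEq ι] (V : Matrix ι ι ℝ) :
    Measure (ι → ℝ) :=
  if h : V.PosSemidef then
    Measure.map (fun z => (psdSqrt h).mulVec z)
      (Measure.pi fun _ : ι => ProbabilityTheory.gaussianReal 0 1)
  else 0

/-- Chi-squared distribution with `k` degrees of freedom: Gamma, shape `k/2`, rate `1/2`. -/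
def chiSq (k : ℝ) : Measure ℝ := ProbabilityTheory.gammaMeasure (k / 2) (1 / 2)

open Classical in
/-- Inverse of the unique symmetric positive definite square root of `S`
(junk value `0` if `S` is not positive definite). -/
def invSqrt {ι : Type*} [Fintype ι] [DecidableEq ι] (S : Matrix ι ι ℝ) : Matrix ι ι ℝ :=
  if h : S.PosDef then (psdSqrt h.posSemidef)⁻¹ else 0

/-- Column-vectorization of an `r × r` matrix, indexed by (column, row) pairs. -/
def vecM {r : ℕ} (M : Matrix (Fin r) (Fin r) ℝ) : Fin r × Fin r → ℝ :=
  fun q => M q.2 q.1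

/-- The commutation matrix `K_rr = ∑ i j, E_r^{ij} ⊗ E_r^{ji}`. -/
def commMatrix (r : ℕ) : Matrix (Fin r × Fin r) (Fin r × Fin r) ℝ :=
  ∑ i : Fin r, ∑ j : Fin r, single i j (1 : ℝ) ⊗ₖ single j i (1 : ℝ)

/-- The matrix `D_rr = ∑ i, E_r^{ii} ⊗ E_r^{ii}`. -/
def dblDiagMatrix (r : ℕ) : Matrix (Fin r × Fin r) (Fin r × Fin r) ℝ :=
  ∑ i : Fin r, single i i (1 : ℝ) ⊗ₖ single i i (1 : ℝ)

/-- The all-ones matrix `J_r`. -/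
def onesMat (r : ℕ) : Matrix (Fin r) (Fin r) ℝ := Matrix.of fun _ _ => 1


/-- Index set for `ℝ^p` partitioned into blocks of sizes `s 0, …, s v`
(the block `Fin.last v` is the noise block, placed last). -/
abbrev BlkIdx (v : ℕ) (s : Fin (v + 1) → ℕ) : Type := (j : Fin (v + 1)) × Fin (s j)

/-- The `(i, j)` block of a matrix, relative to the block partition. -/
def blk {v : ℕ} {s : Fin (v + 1) → ℕ} (U : Matrix (BlkIdx v s) (BlkIdx v s) ℝ)
    (i j : Fin (v + 1)) : Matrix (Fin (s i)) (Fin (s j)) ℝ :=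
  Matrix.of fun a b => U ⟨i, a⟩ ⟨j, b⟩

/-- The diagonal matrix `D_τ = diag(λ_{τ1} I_{p₁}, …, λ_{τv} I_{p_v}, λ_{τ0} I_{p₀})`. -/
def Dmat {v : ℕ} (s : Fin (v + 1) → ℕ) {ι : Type*} (lam : ι → Fin (v + 1) → ℝ) (τ : ι) :
    Matrix (BlkIdx v s) (BlkIdx v s) ℝ :=
  Matrix.diagonal fun i => lam τ i.1

/-- The diagonal matrix obtained from `A` by zeroing out its off-diagonal entries. -/
def diagPart {n : Type*} [Fintype n] [DecidableEq n] (A : Matrix n n ℝ) : Matrix n n ℝ :=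
  Matrix.diagonal fun i => A i i

/-!
Write `V = U J_i` for the `i`-th column block of `U` (with `J_i` the columns of `I_p` in block
`i`), `A = J_i U_ii` for its diagonal block and `W = V - A` for the rest, which is
`O_p(T^{-1/2})`. Since `VᵀV = I` and `D J_i = λ_i J_i`, the remainder
`(UᵀHU)_ii - λ_i I - U_iiᵀ (H_ii - λ_i I) U_ii` equals
`Wᵀ (D - λ_i I) W + Vᵀ (H - D) W + Wᵀ (H - D) A`, a sum of products of two `O_p(T^{-1/2})`
factors with bounded ones. For the diagonal, `UᵀHU - D = Uᵀ (H - D) U + Uᵀ (DU - UD)`, and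
`DU - UD` only sees the off-diagonal blocks of `U`, so `√T (UᵀHU - D) = O_p(1)`.
-/

open scoped Matrix.Norms.Frobenius

theorem transpose_mul_mul_sub_eq {R n m : Type*} [CommRing R] [Fintype n] [Fintype m]
    [DecidableEq n] [DecidableEq m] {V A W : Matrix n m R} {H D : Matrix n n R} {c : R}
    (hVAW : V = A + W) (hV : Vᵀ * V = 1) (hDA : D * A = c • A) (hAD : Aᵀ * D = c • Aᵀ) :
    Vᵀ * H * V - c • 1 - Aᵀ * (H - D) * A
      = Wᵀ * (D - c • 1) * W + Vᵀ * (H - D) * W + Wᵀ * (H - D) * A := by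
  have hDA' : (D - c • 1) * A = 0 := by
    rw [Matrix.sub_mul, hDA, Matrix.smul_mul, Matrix.one_mul, sub_self]
  have hAD' : Aᵀ * (D - c • 1) = 0 := by
    rw [Matrix.mul_sub, hAD, Matrix.mul_smul, Matrix.mul_one, sub_self]
  have hquad : Vᵀ * (D - c • 1) * V = Wᵀ * (D - c • 1) * W := by
    simp only [hVAW, Matrix.transpose_add, Matrix.add_mul, Matrix.mul_add, hAD', hDA',
      Matrix.mul_assoc, Matrix.mul_zero, zero_add]
  have hcross : Vᵀ * (H - D) * V - Aᵀ * (H - D) * A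
      = Vᵀ * (H - D) * W + Wᵀ * (H - D) * A := by
    have hW : W = V - A := by rw [hVAW, add_sub_cancel_left]
    simp only [hW, Matrix.transpose_sub, Matrix.mul_sub, Matrix.sub_mul]
    abel
  calc Vᵀ * H * V - c • 1 - Aᵀ * (H - D) * A
      = Vᵀ * (D - c • 1) * V + (Vᵀ * (H - D) * V - Aᵀ * (H - D) * A) := by
        rw [← hV]
        simp only [Matrix.mul_sub, Matrix.sub_mul, Matrix.mul_smul, Matrix.smul_mul,
          Matrix.mul_one]
        abel
    _ = _ := by rw [hquad, hcross, add_assoc]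

section Frobenius
variable {m n : Type*} [Fintype m] [Fintype n]

theorem frobNorm_eq_norm (M : Matrix m n ℝ) : frobNorm M = ‖M‖ := by
  simp only [frobNorm, frobSq, frobenius_norm_def, Real.norm_eq_abs, Real.rpow_two, sq_abs,
    Real.sqrt_eq_rpow]

theorem norm_transpose_mul_mul_le {k l : Type*} [Fintype k] [Fintype l] (A : Matrix m n ℝ)
    (B : Matrix m k ℝ) (C : Matrix k l ℝ) : ‖Aᵀ * B * C‖ ≤ ‖A‖ * ‖B‖ * ‖C‖ := by
  calc ‖Aᵀ * B * C‖ ≤ ‖Aᵀ‖ * ‖B‖ * ‖C‖ :=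
        (frobenius_norm_mul _ _).trans (by gcongr; exact frobenius_norm_mul _ _)
    _ = ‖A‖ * ‖B‖ * ‖C‖ := by rw [frobenius_norm_transpose]

theorem norm_eq_sqrt_card_of_transpose_mul_self_eq_one [DecidableEq n] {V : Matrix m n ℝ}
    (hV : Vᵀ * V = 1) : ‖V‖ = √(Fintype.card n) := by
  have hcol : ∀ b, ∑ a, V a b ^ 2 = 1 := fun b => by
    simpa [Matrix.mul_apply, sq] using congrFun (congrFun hV b) b
  rw [← frobNorm_eq_norm, frobNorm, frobSq, Finset.sum_comm]
  simp [hcol]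

theorem norm_le_of_abs_le {A B : Matrix m n ℝ} (h : ∀ a b, |A a b| ≤ |B a b|) :
    ‖A‖ ≤ ‖B‖ := by
  simp only [← frobNorm_eq_norm, frobNorm, frobSq]
  refine Real.sqrt_le_sqrt (Finset.sum_le_sum fun a _ => Finset.sum_le_sum fun b _ => ?_)
  exact sq_le_sq.2 (h a b)

theorem norm_diagPart_le [DecidableEq n] (A : Matrix n n ℝ) : ‖diagPart A‖ ≤ ‖A‖ :=
  norm_le_of_abs_le fun a b => by
    rcases eq_or_ne a b with rfl | hab
    · simp [diagPart]
    · simp [diagPart, hab]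

theorem smul_diagPart [DecidableEq n] (t : ℝ) (A : Matrix n n ℝ) :
    t • diagPart A = diagPart (t • A) := by
  rw [diagPart, diagPart, ← Matrix.diagonal_smul]
  rfl

end Frobenius

section BoundedInProb
variable {Ω : Type*} [MeasurableSpace Ω] {μ : Measure Ω} {f g : ℕ → Ω → ℝ}

def BoundedInProb (μ : Measure Ω) (f : ℕ → Ω → ℝ) : Prop :=
  ∀ ε : ℝ, 0 < ε → ∃ M : ℝ, 0 < M ∧ ∀ T, μ {ω | M < f T ω} ≤ ENNReal.ofReal ε

theorem matIsOp_iff_boundedInProb {ι κ : Type*} [Fintype ι] [Fintype κ]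
    {X : ℕ → Ω → Matrix ι κ ℝ} :
    MatIsOp μ X ↔ BoundedInProb μ fun T ω => ‖X T ω‖ := by
  simp only [MatIsOp, BoundedInProb, frobNorm_eq_norm]

theorem BoundedInProb.mono (hf : BoundedInProb μ f) (h : ∀ T ω, g T ω ≤ f T ω) :
    BoundedInProb μ g := fun ε hε =>
  let ⟨M, hM, hle⟩ := hf ε hε
  ⟨M, hM, fun T => (measure_mono fun _ hω => lt_of_lt_of_le hω (h T _)).trans (hle T)⟩

theorem BoundedInProb.const (c : ℝ) : BoundedInProb μ fun _ _ => c := fun ε _ =>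
  ⟨max c 1, by positivity, fun T => by simp [(le_max_left c 1).not_gt]⟩

theorem BoundedInProb.of_le_op (hf : BoundedInProb μ f) (hg : BoundedInProb μ g)
    {h : ℕ → Ω → ℝ} (op : ℝ → ℝ → ℝ) (hop : ∀ M₁ M₂, 0 < M₁ → 0 < M₂ → 0 < op M₁ M₂)
    (hle : ∀ M₁ M₂ T ω, 0 < M₁ → f T ω ≤ M₁ → g T ω ≤ M₂ → h T ω ≤ op M₁ M₂) :
    BoundedInProb μ h := by
  intro ε hε
  obtain ⟨M₁, hM₁, h₁⟩ := hf (ε / 2) (by positivity)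
  obtain ⟨M₂, hM₂, h₂⟩ := hg (ε / 2) (by positivity)
  refine ⟨op M₁ M₂, hop M₁ M₂ hM₁ hM₂, fun T => ?_⟩
  have hsub : {ω | op M₁ M₂ < h T ω} ⊆ {ω | M₁ < f T ω} ∪ {ω | M₂ < g T ω} := by
    intro ω (hω : op M₁ M₂ < h T ω)
    by_contra! hfg
    simp only [Set.mem_union, Set.mem_ofPred_eq, not_or, not_lt] at hfg
    exact hω.not_ge (hle M₁ M₂ T ω hM₁ hfg.1 hfg.2)
  calc μ _ ≤ μ {ω | M₁ < f T ω} + μ {ω | M₂ < g T ω} :=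
        (measure_mono hsub).trans (measure_union_le _ _)
    _ ≤ ENNReal.ofReal (ε / 2) + ENNReal.ofReal (ε / 2) := add_le_add (h₁ T) (h₂ T)
    _ = ENNReal.ofReal ε := by
        rw [← ENNReal.ofReal_add (by positivity) (by positivity), add_halves]

theorem BoundedInProb.add (hf : BoundedInProb μ f) (hg : BoundedInProb μ g) :
    BoundedInProb μ fun T ω => f T ω + g T ω :=
  hf.of_le_op hg (· + ·) (fun _ _ h₁ h₂ => add_pos h₁ h₂)
    fun _ _ _ _ _ hf hg => add_le_add hf hg

theorem BoundedInProb.mul (hf : BoundedInProb μ f) (hg : BoundedInProb μ g)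
    (hg0 : ∀ T ω, 0 ≤ g T ω) : BoundedInProb μ fun T ω => f T ω * g T ω :=
  hf.of_le_op hg (· * ·) (fun _ _ h₁ h₂ => mul_pos h₁ h₂)
    fun _ _ T ω hM₁ hf hg => mul_le_mul hf hg (hg0 T ω) hM₁.le

theorem BoundedInProb.sum {α : Type*} (S : Finset α) {F : α → ℕ → Ω → ℝ}
    (h : ∀ a ∈ S, BoundedInProb μ (F a)) :
    BoundedInProb μ fun T ω => ∑ a ∈ S, F a T ω := by
  classical
  induction S using Finset.induction with
  | empty => exact BoundedInProb.const 0
  | insert a S ha ih =>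
    simp only [Finset.sum_insert ha]
    exact (h a (Finset.mem_insert_self a S)).add
      (ih fun b hb => h b (Finset.mem_insert_of_mem hb))

theorem BoundedInProb.tendsto_measure_lt (hf : BoundedInProb μ fun T ω => √T * f T ω)
    {ε : ℝ} (hε : 0 < ε) : Tendsto (fun T => μ {ω | ε < f T ω}) atTop (𝓝 0) := by
  rw [ENNReal.tendsto_atTop_zero]
  intro b hb
  obtain ⟨δ, -, hδ, hδb⟩ := ENNReal.lt_iff_exists_real_btwn.1 hb
  obtain ⟨M, hM, hle⟩ := hf δ (ENNReal.ofReal_pos.1 hδ)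
  obtain ⟨N, hN⟩ := exists_nat_gt ((M / ε) ^ 2)
  refine ⟨N, fun T hT => le_trans ?_ ((hle T).trans hδb.le)⟩
  have hMT : M < √T * ε := by
    have : M / ε < √T := Real.lt_sqrt (by positivity) |>.2 (hN.trans_le (by exact_mod_cast hT))
    rwa [div_lt_iff₀ hε] at this
  refine measure_mono fun ω (hω : ε < f T ω) => ?_
  exact hMT.trans_le (mul_le_mul_of_nonneg_left hω.le (Real.sqrt_nonneg _))

end BoundedInProb

section Blocks
variable {v : ℕ} {s : Fin (v + 1) → ℕ}

def blockIncl (s : Fin (v + 1) → ℕ) (k : Fin (v + 1)) : Matrix (BlkIdx v s) (Fin (s k)) ℝ :=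
  (1 : Matrix (BlkIdx v s) (BlkIdx v s) ℝ).submatrix id (Sigma.mk (β := fun j => Fin (s j)) k)

theorem blk_eq_transpose_mul_mul (M : Matrix (BlkIdx v s) (BlkIdx v s) ℝ) (k l : Fin (v + 1)) :
    blk M k l = (blockIncl s k)ᵀ * M * blockIncl s l := by
  ext a b
  simp [blk, blockIncl, Matrix.mul_apply, Matrix.one_apply]

theorem blockIncl_transpose_mul_self (k : Fin (v + 1)) :
    (blockIncl s k)ᵀ * blockIncl s k = 1 := by
  ext a b
  simp [blockIncl, Matrix.mul_apply, Matrix.one_apply]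

theorem sum_blockIncl_mul_transpose :
    ∑ k, blockIncl s k * (blockIncl s k)ᵀ = (1 : Matrix (BlkIdx v s) (BlkIdx v s) ℝ) := by
  ext q r
  simp only [Matrix.sum_apply, Matrix.mul_apply, blockIncl, Matrix.transpose_apply,
    Matrix.submatrix_apply, id, Matrix.one_apply]
  rw [← Fintype.sum_sigma (fun p : BlkIdx v s => (if q = p then (1 : ℝ) else 0) *
    if r = p then 1 else 0)]
  simp

def offDiagCol (U : Matrix (BlkIdx v s) (BlkIdx v s) ℝ) (i : Fin (v + 1)) :
    Matrix (BlkIdx v s) (Fin (s i)) ℝ :=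
  ∑ k ∈ Finset.univ.erase i, blockIncl s k * blk U k i

theorem mul_blockIncl_eq_add_offDiagCol (U : Matrix (BlkIdx v s) (BlkIdx v s) ℝ)
    (i : Fin (v + 1)) : U * blockIncl s i = blockIncl s i * blk U i i + offDiagCol U i := by
  calc U * blockIncl s i = (∑ k, blockIncl s k * (blockIncl s k)ᵀ) * U * blockIncl s i := by
        rw [sum_blockIncl_mul_transpose, Matrix.one_mul]
    _ = ∑ k, blockIncl s k * blk U k i := by
        simp only [Matrix.sum_mul, blk_eq_transpose_mul_mul]
        simp only [Matrix.mul_assoc]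
    _ = _ := (Finset.add_sum_erase _ _ (Finset.mem_univ i)).symm

variable {ι : Type*} (lam : ι → Fin (v + 1) → ℝ) (τ : ι)

theorem Dmat_mul_blockIncl (k : Fin (v + 1)) :
    Dmat s lam τ * blockIncl s k = lam τ k • blockIncl s k := by
  ext q a
  by_cases h : q = ⟨k, a⟩
  · subst h; simp [Dmat, blockIncl]
  · simp [Dmat, blockIncl, h]

theorem blockIncl_transpose_mul_Dmat (k : Fin (v + 1)) :
    (blockIncl s k)ᵀ * Dmat s lam τ = lam τ k • (blockIncl s k)ᵀ := by
  rw [← Matrix.transpose_transpose (Dmat s lam τ), ← Matrix.transpose_mul,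
    Dmat, Matrix.diagonal_transpose, ← Dmat, Dmat_mul_blockIncl, Matrix.transpose_smul]

theorem diagPart_sub_Dmat (M : Matrix (BlkIdx v s) (BlkIdx v s) ℝ) :
    diagPart M - Dmat s lam τ = diagPart (M - Dmat s lam τ) := by
  ext q r
  rcases eq_or_ne q r with rfl | hqr
  · simp [diagPart, Dmat]
  · simp [diagPart, Dmat, hqr]

def diagBlockRemainder (U H : Matrix (BlkIdx v s) (BlkIdx v s) ℝ) (i : Fin (v + 1)) :
    Matrix (Fin (s i)) (Fin (s i)) ℝ :=
  blk (Uᵀ * H * U) i i - lam τ i • (1 : Matrix (Fin (s i)) (Fin (s i)) ℝ)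
    - (blk U i i)ᵀ * (blk H i i - lam τ i • (1 : Matrix (Fin (s i)) (Fin (s i)) ℝ))
      * blk U i i

theorem diagBlockRemainder_eq {U : Matrix (BlkIdx v s) (BlkIdx v s) ℝ} (hU : Uᵀ * U = 1)
    (H : Matrix (BlkIdx v s) (BlkIdx v s) ℝ) (i : Fin (v + 1)) :
    diagBlockRemainder lam τ U H i
      = (offDiagCol U i)ᵀ * (Dmat s lam τ - lam τ i • 1) * offDiagCol U i
        + (U * blockIncl s i)ᵀ * (H - Dmat s lam τ) * offDiagCol U i
        + (offDiagCol U i)ᵀ * (H - Dmat s lam τ) * (blockIncl s i * blk U i i) := by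
  have hVV : (U * blockIncl s i)ᵀ * (U * blockIncl s i) = 1 := by
    rw [Matrix.transpose_mul, Matrix.mul_assoc, ← Matrix.mul_assoc Uᵀ, hU, Matrix.one_mul,
      blockIncl_transpose_mul_self]
  have hDA : Dmat s lam τ * (blockIncl s i * blk U i i)
      = lam τ i • (blockIncl s i * blk U i i) := by
    rw [← Matrix.mul_assoc, Dmat_mul_blockIncl, Matrix.smul_mul]
  have hAD : (blockIncl s i * blk U i i)ᵀ * Dmat s lam τ
      = lam τ i • (blockIncl s i * blk U i i)ᵀ := by
    rw [Matrix.transpose_mul, Matrix.mul_assoc, blockIncl_transpose_mul_Dmat, Matrix.mul_smul]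
  have hHii : blk H i i - lam τ i • 1
      = (blockIncl s i)ᵀ * (H - Dmat s lam τ) * blockIncl s i := by
    rw [Matrix.mul_sub, Matrix.sub_mul, blockIncl_transpose_mul_Dmat, Matrix.smul_mul,
      blockIncl_transpose_mul_self, blk_eq_transpose_mul_mul]
  rw [← transpose_mul_mul_sub_eq (mul_blockIncl_eq_add_offDiagCol U i) hVV hDA hAD,
    diagBlockRemainder, hHii, blk_eq_transpose_mul_mul]
  simp only [Matrix.transpose_mul, Matrix.mul_assoc]

theorem norm_smul_diagBlockRemainder_le {U : Matrix (BlkIdx v s) (BlkIdx v s) ℝ}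
    (hU : Uᵀ * U = 1) (H : Matrix (BlkIdx v s) (BlkIdx v s) ℝ) (i : Fin (v + 1)) (t : ℝ) :
    ‖(t * t) • diagBlockRemainder lam τ U H i‖
      ≤ ‖Dmat s lam τ - lam τ i • 1‖ * ‖t • offDiagCol U i‖ ^ 2
        + (‖U * blockIncl s i‖ + ‖blockIncl s i * blk U i i‖)
          * ‖t • (H - Dmat s lam τ)‖ * ‖t • offDiagCol U i‖ := by
  set W := offDiagCol U i
  set E := H - Dmat s lam τ
  set V := U * blockIncl s i
  set A := blockIncl s i * blk U i i
  have hscale : (t * t) • diagBlockRemainder lam τ U H i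
      = (t • W)ᵀ * (Dmat s lam τ - lam τ i • 1) * (t • W) + Vᵀ * (t • E) * (t • W)
        + (t • W)ᵀ * (t • E) * A := by
    simp only [diagBlockRemainder_eq lam τ hU, smul_add, Matrix.transpose_smul,
      Matrix.smul_mul, Matrix.mul_smul, smul_smul, W, E, V, A]
  calc ‖(t * t) • diagBlockRemainder lam τ U H i‖
      ≤ ‖t • W‖ * ‖Dmat s lam τ - lam τ i • 1‖ * ‖t • W‖ + ‖V‖ * ‖t • E‖ * ‖t • W‖
        + ‖t • W‖ * ‖t • E‖ * ‖A‖ := by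
        rw [hscale]
        refine (norm_add_le _ _).trans (add_le_add ((norm_add_le _ _).trans
          (add_le_add ?_ ?_)) ?_) <;> exact norm_transpose_mul_mul_le _ _ _
    _ = _ := by ring

theorem Dmat_mul_sub_mul_Dmat (U : Matrix (BlkIdx v s) (BlkIdx v s) ℝ) :
    Dmat s lam τ * U - U * Dmat s lam τ
      = ∑ i, (Dmat s lam τ - lam τ i • 1) * offDiagCol U i * (blockIncl s i)ᵀ := by
  have hcol : ∀ i, (Dmat s lam τ - lam τ i • 1) * (U * blockIncl s i)
      = (Dmat s lam τ - lam τ i • 1) * offDiagCol U i := fun i => by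
    rw [mul_blockIncl_eq_add_offDiagCol, Matrix.mul_add, ← Matrix.mul_assoc, Matrix.sub_mul,
      Dmat_mul_blockIncl, Matrix.smul_mul, Matrix.one_mul, sub_self, Matrix.zero_mul, zero_add]
  calc Dmat s lam τ * U - U * Dmat s lam τ
      = Dmat s lam τ * U * ∑ i, blockIncl s i * (blockIncl s i)ᵀ
        - U * (∑ i, blockIncl s i * (blockIncl s i)ᵀ) * Dmat s lam τ := by
        rw [sum_blockIncl_mul_transpose, Matrix.mul_one, Matrix.mul_one]
    _ = ∑ i, (Dmat s lam τ - lam τ i • 1) * (U * blockIncl s i) * (blockIncl s i)ᵀ := by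
        simp only [Matrix.mul_sum, Matrix.sum_mul, ← Finset.sum_sub_distrib, Matrix.mul_assoc,
          blockIncl_transpose_mul_Dmat, Matrix.sub_mul, Matrix.smul_mul, Matrix.one_mul,
          Matrix.mul_smul]
    _ = _ := by simp only [hcol]

theorem norm_smul_diagPart_sub_Dmat_le {U : Matrix (BlkIdx v s) (BlkIdx v s) ℝ}
    (hU : Uᵀ * U = 1) (H : Matrix (BlkIdx v s) (BlkIdx v s) ℝ) (t : ℝ) :
    ‖t • (diagPart (Uᵀ * H * U) - Dmat s lam τ)‖
      ≤ ‖U‖ * ‖t • (H - Dmat s lam τ)‖ * ‖U‖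
        + ‖U‖ * ∑ i, ‖Dmat s lam τ - lam τ i • 1‖ * ‖t • offDiagCol U i‖
          * ‖blockIncl s i‖ := by
  have hsplit : t • (Uᵀ * H * U - Dmat s lam τ)
      = Uᵀ * (t • (H - Dmat s lam τ)) * U
        + Uᵀ * ∑ i, (Dmat s lam τ - lam τ i • 1) * (t • offDiagCol U i)
          * (blockIncl s i)ᵀ := by
    simp only [Matrix.mul_smul, Matrix.smul_mul, ← Finset.smul_sum,
      ← Dmat_mul_sub_mul_Dmat, ← smul_add]
    rw [Matrix.mul_sub, Matrix.mul_sub, Matrix.sub_mul, ← Matrix.mul_assoc Uᵀ U, hU,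
      Matrix.one_mul]
    simp only [Matrix.mul_assoc, sub_add_sub_cancel]
  have hsum : ‖∑ i, (Dmat s lam τ - lam τ i • 1) * (t • offDiagCol U i) * (blockIncl s i)ᵀ‖
      ≤ ∑ i, ‖Dmat s lam τ - lam τ i • 1‖ * ‖t • offDiagCol U i‖ * ‖blockIncl s i‖ := by
    refine (norm_sum_le _ _).trans (Finset.sum_le_sum fun i _ => ?_)
    rw [← frobenius_norm_transpose (blockIncl s i)]
    exact (frobenius_norm_mul _ _).trans (by gcongr; exact frobenius_norm_mul _ _)
  calc ‖t • (diagPart (Uᵀ * H * U) - Dmat s lam τ)‖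
      ≤ ‖t • (Uᵀ * H * U - Dmat s lam τ)‖ := by
        rw [diagPart_sub_Dmat, smul_diagPart]
        exact norm_diagPart_le _
    _ ≤ _ := by
        rw [hsplit]
        refine (norm_add_le _ _).trans (add_le_add (norm_transpose_mul_mul_le _ _ _) ?_)
        rw [← frobenius_norm_transpose U]
        exact (frobenius_norm_mul _ _).trans (by gcongr)

end Blocks

section Asymptotics
variable {Ω : Type*} [MeasurableSpace Ω] {μ : Measure Ω} {v : ℕ} {s : Fin (v + 1) → ℕ}
  {U : ℕ → Ω → Matrix (BlkIdx v s) (BlkIdx v s) ℝ}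

theorem boundedInProb_norm_sqrt_smul_offDiagCol
    (hUoff : ∀ i j, i ≠ j → MatIsOp μ fun T ω => Real.sqrt T • blk (U T ω) i j)
    (i : Fin (v + 1)) : BoundedInProb μ fun T ω => ‖√T • offDiagCol (U T ω) i‖ := by
  refine (BoundedInProb.sum (Finset.univ.erase i) fun k hk =>
      (BoundedInProb.const ‖blockIncl s k‖).mul
        (matIsOp_iff_boundedInProb.1 (hUoff k i (Finset.ne_of_mem_erase hk)))
        fun _ _ => norm_nonneg _).mono fun T ω => ?_
  rw [offDiagCol, Finset.smul_sum]
  refine (norm_sum_le _ _).trans (Finset.sum_le_sum fun k _ => ?_)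
  rw [← Matrix.mul_smul]
  exact frobenius_norm_mul _ _

variable {ι : Type*} {lam : ι → Fin (v + 1) → ℝ} {τ : ι}
  {H : ℕ → Ω → Matrix (BlkIdx v s) (BlkIdx v s) ℝ}

theorem matIsOp_smul_diagBlockRemainder (hUorth : ∀ T ω, (U T ω)ᵀ * U T ω = 1)
    (hUoff : ∀ i j, i ≠ j → MatIsOp μ fun T ω => Real.sqrt T • blk (U T ω) i j)
    (hHop : MatIsOp μ fun T ω => Real.sqrt T • (H T ω - Dmat s lam τ)) (i : Fin (v + 1)) :
    MatIsOp μ fun T ω => (T : ℝ) • diagBlockRemainder lam τ (U T ω) (H T ω) i := by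
  set J := blockIncl s i
  set c := √(Fintype.card (BlkIdx v s))
  have hU : ∀ T ω, ‖U T ω‖ = c := fun T ω =>
    norm_eq_sqrt_card_of_transpose_mul_self_eq_one (hUorth T ω)
  obtain ⟨C, hVA⟩ : ∃ C, ∀ T ω, ‖U T ω * J‖ + ‖J * blk (U T ω) i i‖ ≤ C := by
    refine ⟨c * ‖J‖ + ‖J‖ * (‖J‖ * c * ‖J‖), fun T ω => ?_⟩
    rw [blk_eq_transpose_mul_mul, ← hU T ω]
    gcongr
    · exact frobenius_norm_mul _ _
    · exact (frobenius_norm_mul _ _).trans (by gcongr; exact norm_transpose_mul_mul_le _ _ _)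
  have hW := boundedInProb_norm_sqrt_smul_offDiagCol hUoff i
  rw [matIsOp_iff_boundedInProb] at hHop ⊢
  refine (((BoundedInProb.const ‖Dmat s lam τ - lam τ i • 1‖).mul
      (hW.mul hW fun _ _ => norm_nonneg _)
      fun _ _ => mul_nonneg (norm_nonneg _) (norm_nonneg _)).add
    (((BoundedInProb.const C).mul hHop fun _ _ => norm_nonneg _).mul hW
      fun _ _ => norm_nonneg _)).mono fun T ω => ?_
  calc ‖(T : ℝ) • diagBlockRemainder lam τ (U T ω) (H T ω) i‖
      = ‖(√T * √T) • diagBlockRemainder lam τ (U T ω) (H T ω) i‖ := by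
        rw [Real.mul_self_sqrt (Nat.cast_nonneg T)]
    _ ≤ _ := norm_smul_diagBlockRemainder_le lam τ (hUorth T ω) (H T ω) i √T
    _ ≤ _ := by
        rw [sq]
        gcongr _ + ?_ * _ * _
        exact hVA T ω

theorem matTendstoP0_diagPart_sub_Dmat (hUorth : ∀ T ω, (U T ω)ᵀ * U T ω = 1)
    (hUoff : ∀ i j, i ≠ j → MatIsOp μ fun T ω => Real.sqrt T • blk (U T ω) i j)
    (hHop : MatIsOp μ fun T ω => Real.sqrt T • (H T ω - Dmat s lam τ)) :
    MatTendstoP0 μ fun T ω => diagPart ((U T ω)ᵀ * H T ω * U T ω) - Dmat s lam τ := by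
  set c := √(Fintype.card (BlkIdx v s))
  have hU : ∀ T ω, ‖U T ω‖ = c := fun T ω =>
    norm_eq_sqrt_card_of_transpose_mul_self_eq_one (hUorth T ω)
  rw [matIsOp_iff_boundedInProb] at hHop
  have hbound : BoundedInProb μ fun T ω =>
      ‖√T • (diagPart ((U T ω)ᵀ * H T ω * U T ω) - Dmat s lam τ)‖ := by
    refine ((((BoundedInProb.const c).mul hHop fun _ _ => norm_nonneg _).mul
      (BoundedInProb.const c) fun _ _ => by positivity).add
      ((BoundedInProb.const c).mul (BoundedInProb.sum Finset.univ fun i _ =>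
        ((BoundedInProb.const ‖Dmat s lam τ - lam τ i • 1‖).mul
          (boundedInProb_norm_sqrt_smul_offDiagCol hUoff i) fun _ _ => norm_nonneg _).mul
          (BoundedInProb.const ‖blockIncl s i‖) fun _ _ => norm_nonneg _)
        fun _ _ => ?_)).mono fun T ω => ?_
    · exact Finset.sum_nonneg fun _ _ => by positivity
    · simpa only [hU] using norm_smul_diagPart_sub_Dmat_le lam τ (hUorth T ω) (H T ω) √T
  intro ε hε
  refine (hbound.mono fun T ω => ?_).tendsto_measure_lt hε
  rw [norm_smul, Real.norm_of_nonneg (Real.sqrt_nonneg _), frobNorm_eq_norm]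

end Asymptotics

theorem statement13_general {Ω : Type*} [MeasurableSpace Ω] (μ : Measure Ω)
    (v : ℕ) (s : Fin (v + 1) → ℕ)
    {ι : Type*}
    (lam : ι → Fin (v + 1) → ℝ)
    (U : ℕ → Ω → Matrix (BlkIdx v s) (BlkIdx v s) ℝ)
    (hUorth : ∀ T ω, (U T ω)ᵀ * U T ω = 1)
    (hUoff : ∀ i j, i ≠ j → MatIsOp μ fun T ω => Real.sqrt T • blk (U T ω) i j)
    (H : ι → ℕ → Ω → Matrix (BlkIdx v s) (BlkIdx v s) ℝ)
    (hHop : ∀ τ, MatIsOp μ fun T ω => Real.sqrt T • (H τ T ω - Dmat s lam τ)) :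
    (∀ τ, ∀ i : Fin (v + 1), MatIsOp μ fun T ω =>
        (T : ℝ) • (blk ((U T ω)ᵀ * H τ T ω * U T ω) i i
          - lam τ i • (1 : Matrix (Fin (s i)) (Fin (s i)) ℝ)
          - (blk (U T ω) i i)ᵀ * (blk (H τ T ω) i i
              - lam τ i • (1 : Matrix (Fin (s i)) (Fin (s i)) ℝ)) * blk (U T ω) i i)) ∧
      (∀ τ, MatTendstoP0 μ fun T ω =>
        diagPart ((U T ω)ᵀ * H τ T ω * U T ω) - Dmat s lam τ) :=
  ⟨fun τ => matIsOp_smul_diagBlockRemainder hUorth hUoff (hHop τ),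
    fun τ => matTendstoP0_diagPart_sub_Dmat hUorth hUoff (hHop τ)⟩

theorem statement13 {Ω : Type*} [MeasurableSpace Ω] (μ : Measure Ω) [IsProbabilityMeasure μ]
    (v : ℕ) (hv : 1 ≤ v) (s : Fin (v + 1) → ℕ) (hs : ∀ j, 1 ≤ s j)
    {ι : Type*} [Fintype ι] [Nonempty ι]
    (lam : ι → Fin (v + 1) → ℝ) (hlam0 : ∀ τ, lam τ (Fin.last v) = 0)
    (U : ℕ → Ω → Matrix (BlkIdx v s) (BlkIdx v s) ℝ)
    (hUmeas : ∀ T i j, Measurable fun ω => U T ω i j)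
    (hUorth : ∀ T ω, (U T ω)ᵀ * U T ω = 1)
    (hUoff : ∀ i j, i ≠ j → MatIsOp μ fun T ω => Real.sqrt T • blk (U T ω) i j)
    (H : ι → ℕ → Ω → Matrix (BlkIdx v s) (BlkIdx v s) ℝ)
    (hHmeas : ∀ τ T i j, Measurable fun ω => H τ T ω i j)
    (hHsym : ∀ τ T ω, (H τ T ω)ᵀ = H τ T ω)
    (hHop : ∀ τ, MatIsOp μ fun T ω => Real.sqrt T • (H τ T ω - Dmat s lam τ)) :
    (∀ τ, ∀ i : Fin (v + 1), MatIsOp μ fun T ω =>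
        (T : ℝ) • (blk ((U T ω)ᵀ * H τ T ω * U T ω) i i
          - lam τ i • (1 : Matrix (Fin (s i)) (Fin (s i)) ℝ)
          - (blk (U T ω) i i)ᵀ * (blk (H τ T ω) i i
              - lam τ i • (1 : Matrix (Fin (s i)) (Fin (s i)) ℝ)) * blk (U T ω) i i)) ∧
      (∀ τ, MatTendstoP0 μ fun T ω =>
        diagPart ((U T ω)ᵀ * H τ T ω * U T ω) - Dmat s lam τ) :=
  statement13_general μ v s lam U hUorth hUoff H hHop
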